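/- arXiv:2510.06437 — 2 statements merged into one kernel-verified Lean document; each statement's English description precedes it below -/
import Mathlib

section
/- The mutation sequence μ₁, μ₂, μ₁, μ₂, μ₁ applied to the initial seed of the A₂ cluster algebra returns the initial cluster variables up to a swap; in particular the mutation dynamics is periodic of period 5 on clusters. -/
/-! The cluster variables produced by alternating mutations in type A₂ are consecutive terms of the
Lyness recurrence `uₙ₊₂ uₙ = 1 + uₙ₊₁`, and starting from `(x, y)` this recurrence runs through
`(1 + y)/x`, `(1 + x + y)/(x y)`, `(1 + x)/y` and returns to `x, y` as long as no denominator
vanishes. -/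

noncomputable section

/-- The ambient field ℚ(X₁, X₂). -/
abbrev K0 : Type := FractionRing (MvPolynomial (Fin 2) ℚ)

/-- The initial cluster variables X₁, X₂. -/
noncomputable def Xv (i : Fin 2) : K0 :=
  algebraMap (MvPolynomial (Fin 2) ℚ) K0 (MvPolynomial.X i)

/-- Mutation at vertex 1 (`b = true`) or vertex 2 (`b = false`): for the A₂
quiver with one arrow between the two vertices, the exchange relation
Xᵢ·Xᵢ* = ∏_{j→i} Xⱼ + ∏_{j←i} Xⱼ gives Xᵢ* = (1 + X_other)/Xᵢ independently of
the current orientation of the arrow (which gets reversed by the mutation). -/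
noncomputable def mutateA2 (b : Bool) (p : K0 × K0) : K0 × K0 :=
  if b then ((1 + p.2) / p.1, p.2) else (p.1, (1 + p.1) / p.2)

/-- The clusters obtained by the alternating mutations μ₁, μ₂, μ₁, μ₂, μ₁, …
from the initial seed ((X₁,X₂), 1→2). -/
noncomputable def seedA2 : ℕ → K0 × K0
  | 0 => (Xv 0, Xv 1)
  | n + 1 => mutateA2 (n % 2 == 0) (seedA2 n)

section Lyness

variable {F : Type*} [Field F]

def lynessSeq (x y : F) : ℕ → F
  | 0 => x
  | 1 => y
  | n + 2 => (1 + lynessSeq x y (n + 1)) / lynessSeq x y n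

variable {x y : F}

theorem lynessSeq_two : lynessSeq x y 2 = (1 + y) / x := rfl

theorem lynessSeq_three (hx : x ≠ 0) : lynessSeq x y 3 = (1 + x + y) / (x * y) := by
  change (1 + (1 + y) / x) / y = _
  field_simp
  ring

theorem lynessSeq_four (hx : x ≠ 0) (hy : y ≠ 0) (h1y : 1 + y ≠ 0) :
    lynessSeq x y 4 = (1 + x) / y := by
  rw [lynessSeq, lynessSeq_three hx, lynessSeq_two]
  field_simp
  ring

theorem lynessSeq_five (hx : x ≠ 0) (hy : y ≠ 0) (h1y : 1 + y ≠ 0) (h1xy : 1 + x + y ≠ 0) :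
    lynessSeq x y 5 = x := by
  rw [lynessSeq, lynessSeq_four hx hy h1y, lynessSeq_three hx]
  field_simp
  ring

theorem lynessSeq_six (hx : x ≠ 0) (hy : y ≠ 0) (h1x : 1 + x ≠ 0) (h1y : 1 + y ≠ 0)
    (h1xy : 1 + x + y ≠ 0) : lynessSeq x y 6 = y := by
  rw [lynessSeq, lynessSeq_five hx hy h1y h1xy, lynessSeq_four hx hy h1y]
  exact div_div_cancel₀ h1x

end Lyness

theorem seedA2_eq_lynessSeq (k : ℕ) :
    seedA2 (2 * k) = (lynessSeq (Xv 0) (Xv 1) (2 * k), lynessSeq (Xv 0) (Xv 1) (2 * k + 1)) ∧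
      seedA2 (2 * k + 1) =
        (lynessSeq (Xv 0) (Xv 1) (2 * k + 2), lynessSeq (Xv 0) (Xv 1) (2 * k + 1)) := by
  induction k with
  | zero => simp [seedA2, mutateA2, lynessSeq]
  | succ k ih =>
    rw [mul_add_one]
    have h_even : seedA2 (2 * k + 2) =
        (lynessSeq (Xv 0) (Xv 1) (2 * k + 2), lynessSeq (Xv 0) (Xv 1) (2 * k + 2 + 1)) := by
      rw [seedA2.eq_2, ih.2]
      simp [mutateA2, Nat.add_mod, lynessSeq]
    refine ⟨h_even, ?_⟩
    rw [seedA2.eq_2, h_even]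
    simp [mutateA2, Nat.mul_mod_right, lynessSeq]

theorem MvPolynomial.algebraMap_fractionRing_ne_zero_of_eval_ne_zero {σ R : Type*} [CommRing R]
    [IsDomain R] {p : MvPolynomial σ R} (f : σ → R) (h : eval f p ≠ 0) :
    algebraMap _ (FractionRing (MvPolynomial σ R)) p ≠ 0 := by
  rw [Ne, IsFractionRing.to_map_eq_zero_iff]
  rintro rfl
  simp at h

/-- After the five mutations μ₁, μ₂, μ₁, μ₂, μ₁ the unordered pair of cluster
variables is again {X₁, X₂}. -/
theorem period_five_A2 :
    ({(seedA2 5).1, (seedA2 5).2} : Set K0) = {Xv 0, Xv 1} := by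
  -- each denominator is the image of a polynomial with positive coefficients
  have ne_zero (p : MvPolynomial (Fin 2) ℚ) (hp : p.eval 1 ≠ 0) :
      algebraMap _ K0 p ≠ 0 :=
    MvPolynomial.algebraMap_fractionRing_ne_zero_of_eval_ne_zero 1 hp
  have hx : Xv 0 ≠ 0 := ne_zero _ (by simp)
  have hy : Xv 1 ≠ 0 := ne_zero _ (by simp)
  have h1x : 1 + Xv 0 ≠ 0 := by simpa [Xv] using ne_zero (1 + .X 0) (by norm_num)
  have h1y : 1 + Xv 1 ≠ 0 := by simpa [Xv] using ne_zero (1 + .X 1) (by norm_num)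
  have h1xy : 1 + Xv 0 + Xv 1 ≠ 0 := by
    simpa [Xv] using ne_zero (1 + .X 0 + .X 1) (by norm_num)
  have h5 : seedA2 5 = (Xv 1, Xv 0) := by
    rw [(seedA2_eq_lynessSeq 2).2, lynessSeq_five hx hy h1y h1xy,
      lynessSeq_six hx hy h1x h1y h1xy]
  rw [h5, Set.pair_comm]
end
end

section
/- For the map Θ defined on Laurent monomials in variables Y_{j,a} by Θ(Y_{j,a}) = Y_{j,a}·A_{i,aq^{−1}}^{−δ_{ij}}·(Σ_{i,aq^{−3}}/Σ_{i,aq^{−1}})^{δ_{ij}} in the sl₂ case (single index i = j = 1, A_{1,a} = Y_{1,aq^{−1}}Y_{1,aq} and Σ_{1,a} = ∑_{k≥0}∏_{j=0}^{k−1}A_{1,aq^{−2j}}^{−1}), the element χ(a) = Y_{1,a} + Y_{1,aq²}^{−1} is fixed: Θ(Y_{1,a}) + Θ(Y_{1,aq²})^{−1} = Y_{1,a} + Y_{1,aq²}^{−1}. -/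
/-!
The q-difference equation Σ_{1,b} = 1 + A_{1,b}^{−1}Σ_{1,bq^{−2}} at b q^{−1} rewrites both halves
of χ(a) under Θ as a monomial plus a correction:
Θ(Y_{1,b}) = Y_{1,b} − Y_{1,b}Σ_{1,bq^{−1}}^{−1} and
Θ(Y_{1,b})^{−1} = Y_{1,b}^{−1} + Y_{1,bq^{−2}}Σ_{1,bq^{−3}}^{−1}.
For b = a and b = aq² both corrections are ±Y_{1,a}Σ_{1,aq^{−1}}^{−1}, so they cancel.
-/

section UnitIdentities

variable {R : Type*} [CommRing R] (y α σ σ' : Rˣ)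

theorem units_mul_inv_mul_mul_inv_eq_sub (h : (σ : R) = 1 + ↑α⁻¹ * ↑σ') :
    ((y * α⁻¹ * σ' * σ⁻¹ : Rˣ) : R) = y - y * ↑σ⁻¹ := by
  have hσ : (σ : R) * ↑σ⁻¹ = 1 := σ.mul_inv
  push_cast
  linear_combination (-(y : R) * ↑σ⁻¹) * h + (y : R) * hσ

theorem units_mul_inv_mul_mul_inv_inv_eq_add (h : (σ : R) = 1 + ↑α⁻¹ * ↑σ') :
    (((y * α⁻¹ * σ' * σ⁻¹)⁻¹ : Rˣ) : R) = ↑y⁻¹ + ↑y⁻¹ * α * ↑σ'⁻¹ := by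
  have hα : (α : R) * ↑α⁻¹ = 1 := α.mul_inv
  have hσ' : (σ' : R) * ↑σ'⁻¹ = 1 := σ'.mul_inv
  simp only [mul_inv, inv_inv]
  push_cast
  linear_combination ((y⁻¹ : Rˣ) * (α : R) * ↑σ'⁻¹) * h
    + ((y⁻¹ : Rˣ) * (σ' : R) * ↑σ'⁻¹) * hα + (y⁻¹ : Rˣ) * hσ'

end UnitIdentities

section Theta

variable {R : Type*} [CommRing R] {Y A Sg ΘY : ℤ → Rˣ}

theorem theta_eq_sub
    (hSg : ∀ b : ℤ, (Sg b : R) = 1 + ((A b)⁻¹ : Rˣ) * (Sg (b - 2) : R))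
    (hΘY : ∀ b : ℤ, ΘY b = Y b * (A (b - 1))⁻¹ * Sg (b - 3) * (Sg (b - 1))⁻¹) (b : ℤ) :
    (ΘY b : R) = Y b - Y b * ↑(Sg (b - 1))⁻¹ := by
  have hSg' := hSg (b - 1)
  rw [show b - 1 - 2 = b - 3 by ring] at hSg'
  rw [hΘY b]
  exact units_mul_inv_mul_mul_inv_eq_sub _ _ _ _ hSg'

theorem theta_inv_eq_add (hA : ∀ b : ℤ, A b = Y (b - 1) * Y (b + 1))
    (hSg : ∀ b : ℤ, (Sg b : R) = 1 + ((A b)⁻¹ : Rˣ) * (Sg (b - 2) : R))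
    (hΘY : ∀ b : ℤ, ΘY b = Y b * (A (b - 1))⁻¹ * Sg (b - 3) * (Sg (b - 1))⁻¹) (b : ℤ) :
    (((ΘY b)⁻¹ : Rˣ) : R) = ↑(Y b)⁻¹ + Y (b - 2) * ↑(Sg (b - 3))⁻¹ := by
  have hSg' := hSg (b - 1)
  rw [show b - 1 - 2 = b - 3 by ring] at hSg'
  have hYA : (Y b)⁻¹ * A (b - 1) = Y (b - 2) := by
    rw [hA, show b - 1 - 1 = b - 2 by ring, show b - 1 + 1 = b by ring, inv_mul_cancel_comm_assoc]
  rw [hΘY b, units_mul_inv_mul_mul_inv_inv_eq_add _ _ _ _ hSg', ← hYA, Units.val_mul]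

end Theta

theorem theta_fixes_qcharacter
    (R : Type*) [CommRing R] (Y A Sg ΘY : ℤ → Rˣ)
    -- A_{1,b} = Y_{1,bq^{−1}}·Y_{1,bq}
    (hA : ∀ b : ℤ, A b = Y (b - 1) * Y (b + 1))
    -- the q-difference equation Σ_{1,b} = 1 + A_{1,b}^{−1}·Σ_{1,bq^{−2}}
    (hSg : ∀ b : ℤ, (Sg b : R) = 1 + ((A b)⁻¹ : Rˣ) * (Sg (b - 2) : R))
    -- Θ(Y_{1,b}) = Y_{1,b}·A_{1,bq^{−1}}^{−1}·Σ_{1,bq^{−3}}·Σ_{1,bq^{−1}}^{−1}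
    (hΘY : ∀ b : ℤ, ΘY b = Y b * (A (b - 1))⁻¹ * Sg (b - 3) * (Sg (b - 1))⁻¹) :
    ∀ a : ℤ,
      ((ΘY a : R) + ((ΘY (a + 2))⁻¹ : Rˣ)) = (Y a : R) + ((Y (a + 2))⁻¹ : Rˣ) := by
  intro a
  rw [theta_eq_sub hSg hΘY, theta_inv_eq_add hA hSg hΘY, show a + 2 - 2 = a by ring,
    show a + 2 - 3 = a - 1 by ring]
  ring
end
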